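/- Let (β,α) ∈ Δ and suppose T_{β,α} has matching. Then I(β,α) is a subinterval of (0,2−β): whenever α₁, α₂ ∈ I(β,α) and α₁ ≤ α′ ≤ α₂, then α′ ∈ I(β,α). -/
import Mathlib


noncomputable section

/-- The upper intermediate β-transformation `T⁺_{β,α}` on `[0,1]`. -/
def Tpos (β α : ℝ) (x : ℝ) : ℝ :=
  if x = (1 - α) / β then 0 else Int.fract (β * x + α)

/-- The lower intermediate β-transformation `T⁻_{β,α}` on `[0,1]`. -/
def Tneg (β α : ℝ) (x : ℝ) : ℝ :=
  if x = (1 - α) / β then 1 else Int.fract (β * x + α)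

/-- The itinerary `τ⁺_{β,α}(x)`: index `n` (from 0) is the `(n+1)`-st entry;
entry is `false` (i.e. 0) iff the `n`-th iterate is `< c`. -/
def tauPos (β α x : ℝ) : ℕ → Bool :=
  fun n => if (Tpos β α)^[n] x < (1 - α) / β then false else true

/-- The itinerary `τ⁻_{β,α}(x)`: entry is `false` (i.e. 0) iff the iterate is `≤ c`. -/
def tauNeg (β α x : ℝ) : ℕ → Bool :=
  fun n => if (Tneg β α)^[n] x ≤ (1 - α) / β then false else true

/-- The kneading invariant `k₊` of `(β,α)`. -/
def kPlus (β α : ℝ) : ℕ → Bool := tauPos β α ((1 - α) / β)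

/-- The kneading invariant `k₋` of `(β,α)`. -/
def kMinus (β α : ℝ) : ℕ → Bool := tauNeg β α ((1 - α) / β)

/-- The kneading space `Ω_{β,α}`. -/
def OmegaSet (β α : ℝ) : Set (ℕ → Bool) :=
  (tauPos β α '' Set.Icc 0 1) ∪ (tauNeg β α '' Set.Icc 0 1)

/-- `Ω` is a subshift of finite type: there is a finite set of finite forbidden words
such that `Ω` is exactly the set of sequences avoiding them. -/
def IsSFT (Ω : Set (ℕ → Bool)) : Prop :=
  ∃ F : Finset (List Bool),
    Ω = {ω | ∀ m n : ℕ, List.ofFn (fun i : Fin n => ω (m + i)) ∉ F}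

/-- `T_{β,α}` has matching. -/
def HasMatching (β α : ℝ) : Prop :=
  ∃ n : ℕ, (Tpos β α)^[n] 0 = (Tneg β α)^[n] 1

/-- The matching time: the smallest `n` with `(T⁺)ⁿ(0) = (T⁻)ⁿ(1)`. -/
def matchingTime (β α : ℝ) : ℕ :=
  sInf {n : ℕ | (Tpos β α)^[n] 0 = (Tneg β α)^[n] 1}

/-- `T_{β,α}` and `T_{β,α'}` have the same matching: both have matching, with the same
matching time `n`, and their kneading invariants agree in the first `n+1` entries. -/
def SameMatching (β α α' : ℝ) : Prop :=
  HasMatching β α ∧ HasMatching β α' ∧ matchingTime β α = matchingTime β α' ∧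
    ∀ i ≤ matchingTime β α, kPlus β α i = kPlus β α' i ∧ kMinus β α i = kMinus β α' i

/-- The matching set `I(β,α)` (a subset of `(0, 2-β)`). -/
def matchInterval (β α : ℝ) : Set ℝ :=
  {α' | α' ∈ Set.Ioo (0 : ℝ) (2 - β) ∧ SameMatching β α α'}

/-- The parameter region `Δ`. -/
def DeltaSet : Set (ℝ × ℝ) :=
  {p | p.1 ∈ Set.Ioo (1 : ℝ) 2 ∧ p.2 ∈ Set.Ioo (0 : ℝ) (2 - p.1)}

/-- A sequence in `{0,1}^ℕ` is periodic. -/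
def IsPeriodicSeq (ω : ℕ → Bool) : Prop :=
  ∃ p : ℕ, 1 ≤ p ∧ ∀ n, ω (n + p) = ω n

/-- A sequence in `{0,1}^ℕ` is eventually periodic. -/
def IsEvPeriodicSeq (ω : ℕ → Bool) : Prop :=
  ∃ k : ℕ, IsPeriodicSeq (fun n => ω (n + k))

/-- Strict lexicographic order on `{0,1}^ℕ`: at the first index where they differ,
`ω` has entry 0 and `ν` has entry 1. -/
def lexLt (ω ν : ℕ → Bool) : Prop :=
  ∃ n : ℕ, (∀ m < n, ω m = ν m) ∧ ω n = false ∧ ν n = true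


/-! ### Auxiliary lemmas -/

lemma Tpos_mem_Icc (β α x : ℝ) : Tpos β α x ∈ Set.Icc (0:ℝ) 1 := by
  unfold Tpos
  split
  · exact ⟨le_refl 0, zero_le_one⟩
  · exact ⟨Int.fract_nonneg _, (Int.fract_lt_one _).le⟩

lemma Tneg_mem_Icc (β α x : ℝ) : Tneg β α x ∈ Set.Icc (0:ℝ) 1 := by
  unfold Tneg
  split
  · exact ⟨zero_le_one, le_refl 1⟩
  · exact ⟨Int.fract_nonneg _, (Int.fract_lt_one _).le⟩

lemma iterPos_mem (β α : ℝ) (k : ℕ) : (Tpos β α)^[k] 0 ∈ Set.Icc (0:ℝ) 1 := by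
  cases k with
  | zero => exact ⟨le_refl 0, zero_le_one⟩
  | succ k => rw [Function.iterate_succ_apply']; exact Tpos_mem_Icc _ _ _

lemma iterNeg_mem (β α : ℝ) (k : ℕ) : (Tneg β α)^[k] 1 ∈ Set.Icc (0:ℝ) 1 := by
  cases k with
  | zero => exact ⟨zero_le_one, le_refl 1⟩
  | succ k => rw [Function.iterate_succ_apply']; exact Tneg_mem_Icc _ _ _

lemma Tpos_eq {β α : ℝ} (hβ : 1 < β) (hβ2 : β < 2) (hα : 0 < α) (hα2 : α < 2 - β)
    {x : ℝ} (hx : x ∈ Set.Icc (0:ℝ) 1) :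
    Tpos β α x = β * x + α - (if x < (1 - α)/β then 0 else 1) := by
  have hβ0 : (0:ℝ) < β := by linarith
  have hc : β * ((1 - α)/β) = 1 - α := by field_simp
  by_cases hxc : x = (1 - α)/β
  · subst hxc
    rw [Tpos, if_pos rfl, if_neg (lt_irrefl _)]
    linarith
  · rw [Tpos, if_neg hxc]
    by_cases hlt : x < (1 - α)/β
    · rw [if_pos hlt]
      have h1 : β * x + α < 1 := by nlinarith [mul_lt_mul_of_pos_left hlt hβ0]
      have h0 : 0 ≤ β * x + α := by nlinarith [hx.1]
      rw [Int.fract_eq_self.mpr ⟨h0, h1⟩]; ring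
    · rw [if_neg hlt]
      have hgt : (1 - α)/β < x := lt_of_le_of_ne (not_lt.mp hlt) (Ne.symm hxc)
      have h1 : 1 < β * x + α := by nlinarith [mul_lt_mul_of_pos_left hgt hβ0]
      have h2 : β * x + α < 2 := by nlinarith [hx.2]
      have hf : Int.fract (β * x + α) = β * x + α - 1 := by
        have h3 := Int.fract_sub_intCast (β * x + α) 1
        push_cast at h3
        rw [← h3]
        exact Int.fract_eq_self.mpr ⟨by linarith, by linarith⟩
      rw [hf]

lemma Tneg_eq {β α : ℝ} (hβ : 1 < β) (hβ2 : β < 2) (hα : 0 < α) (hα2 : α < 2 - β)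
    {x : ℝ} (hx : x ∈ Set.Icc (0:ℝ) 1) :
    Tneg β α x = β * x + α - (if x ≤ (1 - α)/β then 0 else 1) := by
  have hβ0 : (0:ℝ) < β := by linarith
  have hc : β * ((1 - α)/β) = 1 - α := by field_simp
  by_cases hxc : x = (1 - α)/β
  · subst hxc
    rw [Tneg, if_pos rfl, if_pos (le_refl _)]
    linarith
  · rw [Tneg, if_neg hxc]
    by_cases hlt : x ≤ (1 - α)/β
    · rw [if_pos hlt]
      have hlt' : x < (1 - α)/β := lt_of_le_of_ne hlt hxc
      have h1 : β * x + α < 1 := by nlinarith [mul_lt_mul_of_pos_left hlt' hβ0]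
      have h0 : 0 ≤ β * x + α := by nlinarith [hx.1]
      rw [Int.fract_eq_self.mpr ⟨h0, h1⟩]; ring
    · rw [if_neg hlt]
      have hgt : (1 - α)/β < x := not_le.mp hlt
      have h1 : 1 < β * x + α := by nlinarith [mul_lt_mul_of_pos_left hgt hβ0]
      have h2 : β * x + α < 2 := by nlinarith [hx.2]
      have hf : Int.fract (β * x + α) = β * x + α - 1 := by
        have h3 := Int.fract_sub_intCast (β * x + α) 1
        push_cast at h3
        rw [← h3]
        exact Int.fract_eq_self.mpr ⟨by linarith, by linarith⟩
      rw [hf]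

lemma tauPos_false_iff (β α x : ℝ) (k : ℕ) :
    tauPos β α x k = false ↔ (Tpos β α)^[k] x < (1 - α)/β := by
  unfold tauPos; split <;> simp_all

lemma tauNeg_false_iff (β α x : ℝ) (k : ℕ) :
    tauNeg β α x k = false ↔ (Tneg β α)^[k] x ≤ (1 - α)/β := by
  unfold tauNeg; split <;> simp_all

lemma iterPos_succ {β α : ℝ} (hβ : 1 < β) (hβ2 : β < 2) (hα : 0 < α) (hα2 : α < 2 - β)
    (k : ℕ) :
    (Tpos β α)^[k+1] 0 = β * (Tpos β α)^[k] 0 + α - (if tauPos β α 0 k then 1 else 0) := by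
  rw [Function.iterate_succ_apply', Tpos_eq hβ hβ2 hα hα2 (iterPos_mem β α k)]
  unfold tauPos
  by_cases h : (Tpos β α)^[k] 0 < (1 - α)/β <;> simp [h]

lemma iterNeg_succ {β α : ℝ} (hβ : 1 < β) (hβ2 : β < 2) (hα : 0 < α) (hα2 : α < 2 - β)
    (k : ℕ) :
    (Tneg β α)^[k+1] 1 = β * (Tneg β α)^[k] 1 + α - (if tauNeg β α 1 k then 1 else 0) := by
  rw [Function.iterate_succ_apply', Tneg_eq hβ hβ2 hα hα2 (iterNeg_mem β α k)]
  unfold tauNeg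
  by_cases h : (Tneg β α)^[k] 1 ≤ (1 - α)/β <;> simp [h]

lemma Tpos_c (β α : ℝ) : Tpos β α ((1 - α)/β) = 0 := if_pos rfl
lemma Tneg_c (β α : ℝ) : Tneg β α ((1 - α)/β) = 1 := if_pos rfl

lemma kPlus_succ (β α : ℝ) (k : ℕ) : kPlus β α (k+1) = tauPos β α 0 k := by
  unfold kPlus tauPos
  rw [Function.iterate_succ_apply, Tpos_c]

lemma kMinus_succ (β α : ℝ) (k : ℕ) : kMinus β α (k+1) = tauNeg β α 1 k := by
  unfold kMinus tauNeg
  rw [Function.iterate_succ_apply, Tneg_c]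

lemma kPlus_zero (β α : ℝ) : kPlus β α 0 = true := by
  simp [kPlus, tauPos]

lemma kMinus_zero (β α : ℝ) : kMinus β α 0 = false := by
  simp [kMinus, tauNeg]

lemma c_anti {β a b : ℝ} (hβ : 0 < β) (h : a ≤ b) : (1 - b)/β ≤ (1 - a)/β := by
  rw [div_le_div_iff₀ hβ hβ]; nlinarith

lemma tauPos_true_iff (β α x : ℝ) (k : ℕ) :
    tauPos β α x k = true ↔ ¬ ((Tpos β α)^[k] x < (1 - α)/β) := by
  unfold tauPos; split <;> simp_all

lemma tauNeg_true_iff (β α x : ℝ) (k : ℕ) :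
    tauNeg β α x k = true ↔ ¬ ((Tneg β α)^[k] x ≤ (1 - α)/β) := by
  unfold tauNeg; split <;> simp_all

lemma key (β : ℝ) (hβ : 1 < β) (hβ2 : β < 2) (α₁ α' α₂ : ℝ)
    (h10 : 0 < α₁) (h22 : α₂ < 2 - β) (hle₁ : α₁ ≤ α') (hle₂ : α' ≤ α₂)
    (n : ℕ)
    (hdP : ∀ k < n, tauPos β α₁ 0 k = tauPos β α₂ 0 k)
    (hdN : ∀ k < n, tauNeg β α₁ 1 k = tauNeg β α₂ 1 k) :
    ∀ k, k ≤ n →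
      ((Tpos β α₁)^[k] 0 ≤ (Tpos β α')^[k] 0 ∧ (Tpos β α')^[k] 0 ≤ (Tpos β α₂)^[k] 0) ∧
      ((Tneg β α₁)^[k] 1 ≤ (Tneg β α')^[k] 1 ∧ (Tneg β α')^[k] 1 ≤ (Tneg β α₂)^[k] 1) ∧
      ((Tpos β α')^[k] 0 - (Tneg β α')^[k] 1 = (Tpos β α₁)^[k] 0 - (Tneg β α₁)^[k] 1) ∧
      (∀ j, j < k → tauPos β α' 0 j = tauPos β α₁ 0 j ∧ tauNeg β α' 1 j = tauNeg β α₁ 1 j) := by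
  have hβ0 : (0:ℝ) < β := by linarith
  have h1' : 0 < α' := lt_of_lt_of_le h10 hle₁
  have h2' : α' < 2 - β := lt_of_le_of_lt hle₂ h22
  have h12 : α₁ < 2 - β := lt_of_le_of_lt (hle₁.trans hle₂) h22
  have h20 : 0 < α₂ := lt_of_lt_of_le h10 (hle₁.trans hle₂)
  intro k
  induction k with
  | zero =>
      intro _
      exact ⟨⟨le_rfl, le_rfl⟩, ⟨le_rfl, le_rfl⟩, rfl,
        fun j hj => absurd hj (Nat.not_lt_zero j)⟩
  | succ k ih =>
      intro hk
      have hk' : k < n := hk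
      obtain ⟨⟨hA1, hA2⟩, ⟨hB1, hB2⟩, hdiff, hjj⟩ := ih (le_of_lt hk')
      have hcm1 : (1 - α')/β ≤ (1 - α₁)/β := c_anti hβ0 hle₁
      have hcm2 : (1 - α₂)/β ≤ (1 - α')/β := c_anti hβ0 hle₂
      have heP := hdP k hk'
      have heN := hdN k hk'
      have hdP' : tauPos β α' 0 k = tauPos β α₁ 0 k := by
        cases hb : tauPos β α₁ 0 k with
        | false =>
            have hb2 : tauPos β α₂ 0 k = false := by rw [← heP]; exact hb
            have l2 : (Tpos β α₂)^[k] 0 < (1 - α₂)/β := (tauPos_false_iff β α₂ 0 k).mp hb2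
            exact (tauPos_false_iff β α' 0 k).mpr
              (lt_of_le_of_lt hA2 (lt_of_lt_of_le l2 hcm2))
        | true =>
            have l1 : (1 - α₁)/β ≤ (Tpos β α₁)^[k] 0 :=
              not_lt.mp ((tauPos_true_iff β α₁ 0 k).mp hb)
            exact (tauPos_true_iff β α' 0 k).mpr
              (not_lt.mpr (le_trans hcm1 (le_trans l1 hA1)))
      have hdN' : tauNeg β α' 1 k = tauNeg β α₁ 1 k := by
        cases hb : tauNeg β α₁ 1 k with
        | false =>
            have hb2 : tauNeg β α₂ 1 k = false := by rw [← heN]; exact hb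
            have l2 : (Tneg β α₂)^[k] 1 ≤ (1 - α₂)/β := (tauNeg_false_iff β α₂ 1 k).mp hb2
            exact (tauNeg_false_iff β α' 1 k).mpr
              (le_trans hB2 (le_trans l2 hcm2))
        | true =>
            have l1 : ¬ ((Tneg β α₁)^[k] 1 ≤ (1 - α₁)/β) :=
              (tauNeg_true_iff β α₁ 1 k).mp hb
            have l1' : (1 - α₁)/β < (Tneg β α₁)^[k] 1 := not_le.mp l1
            exact (tauNeg_true_iff β α' 1 k).mpr
              (not_le.mpr (lt_of_le_of_lt hcm1 (lt_of_lt_of_le l1' hB1)))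
      have hdP2 : tauPos β α₂ 0 k = tauPos β α₁ 0 k := heP.symm
      have hdN2 : tauNeg β α₂ 1 k = tauNeg β α₁ 1 k := heN.symm
      refine ⟨⟨?_, ?_⟩, ⟨?_, ?_⟩, ?_, ?_⟩
      · rw [iterPos_succ hβ hβ2 h10 h12 k, iterPos_succ hβ hβ2 h1' h2' k, hdP']
        have hm := mul_le_mul_of_nonneg_left hA1 hβ0.le
        linarith
      · rw [iterPos_succ hβ hβ2 h1' h2' k, iterPos_succ hβ hβ2 h20 h22 k, hdP', hdP2]
        have hm := mul_le_mul_of_nonneg_left hA2 hβ0.le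
        linarith
      · rw [iterNeg_succ hβ hβ2 h10 h12 k, iterNeg_succ hβ hβ2 h1' h2' k, hdN']
        have hm := mul_le_mul_of_nonneg_left hB1 hβ0.le
        linarith
      · rw [iterNeg_succ hβ hβ2 h1' h2' k, iterNeg_succ hβ hβ2 h20 h22 k, hdN', hdN2]
        have hm := mul_le_mul_of_nonneg_left hB2 hβ0.le
        linarith
      · rw [iterPos_succ hβ hβ2 h1' h2' k, iterNeg_succ hβ hβ2 h1' h2' k,
          iterPos_succ hβ hβ2 h10 h12 k, iterNeg_succ hβ hβ2 h10 h12 k, hdP', hdN']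
        linear_combination β * hdiff
      · intro j hj
        rcases Nat.lt_succ_iff_lt_or_eq.mp hj with h | h
        · exact hjj j h
        · subst h; exact ⟨hdP', hdN'⟩

theorem matchInterval_is_interval (β α : ℝ)
    (hβ : β ∈ Set.Ioo (1 : ℝ) 2) (hα : α ∈ Set.Ioo (0 : ℝ) (2 - β))
    (hM : HasMatching β α) (α₁ α₂ α' : ℝ)
    (h₁ : α₁ ∈ matchInterval β α) (h₂ : α₂ ∈ matchInterval β α)
    (hle₁ : α₁ ≤ α') (hle₂ : α' ≤ α₂) : α' ∈ matchInterval β α := by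
  obtain ⟨hβ1, hβ2⟩ := hβ
  simp only [matchInterval, SameMatching, Set.mem_setOf_eq] at h₁ h₂ ⊢
  obtain ⟨hI₁, hMa, hM₁, ht₁, hk₁⟩ := h₁
  obtain ⟨hI₂, -, hM₂, ht₂, hk₂⟩ := h₂
  -- digit agreement of the endpoints below the matching time
  have hdP : ∀ k < matchingTime β α, tauPos β α₁ 0 k = tauPos β α₂ 0 k := by
    intro k hkn
    have e1 : kPlus β α (k+1) = kPlus β α₁ (k+1) := (hk₁ (k+1) hkn).1
    have e2 : kPlus β α (k+1) = kPlus β α₂ (k+1) := (hk₂ (k+1) hkn).1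
    rw [← kPlus_succ β α₁ k, ← kPlus_succ β α₂ k, ← e1, ← e2]
  have hdN : ∀ k < matchingTime β α, tauNeg β α₁ 1 k = tauNeg β α₂ 1 k := by
    intro k hkn
    have e1 : kMinus β α (k+1) = kMinus β α₁ (k+1) := (hk₁ (k+1) hkn).2
    have e2 : kMinus β α (k+1) = kMinus β α₂ (k+1) := (hk₂ (k+1) hkn).2
    rw [← kMinus_succ β α₁ k, ← kMinus_succ β α₂ k, ← e1, ← e2]
  have K := key β hβ1 hβ2 α₁ α' α₂ hI₁.1 hI₂.2 hle₁ hle₂ (matchingTime β α) hdP hdN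
  -- matching for α₁ at time matchingTime β α
  have hmem₁ : (Tpos β α₁)^[matchingTime β α] 0 = (Tneg β α₁)^[matchingTime β α] 1 := by
    have h := Nat.sInf_mem hM₁
    rw [ht₁]; exact h
  have hdiffn := (K (matchingTime β α) le_rfl).2.2.1
  have hmatch' : (Tpos β α')^[matchingTime β α] 0 = (Tneg β α')^[matchingTime β α] 1 := by
    linarith
  have hM' : HasMatching β α' := ⟨_, hmatch'⟩
  have htime' : matchingTime β α' = matchingTime β α := by
    apply le_antisymm
    · exact Nat.sInf_le hmatch'
    · by_contra hcon
      have hlt : matchingTime β α' < matchingTime β α := not_le.mp hcon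
      have hmem' : (Tpos β α')^[matchingTime β α'] 0 = (Tneg β α')^[matchingTime β α'] 1 :=
        Nat.sInf_mem hM'
      have hd := (K (matchingTime β α') (le_of_lt hlt)).2.2.1
      have h1 : (Tpos β α₁)^[matchingTime β α'] 0 = (Tneg β α₁)^[matchingTime β α'] 1 := by
        linarith
      have hle : matchingTime β α₁ ≤ matchingTime β α' := Nat.sInf_le h1
      omega
  refine ⟨⟨lt_of_lt_of_le hI₁.1 hle₁, lt_of_le_of_lt hle₂ hI₂.2⟩, hMa, hM', htime'.symm, ?_⟩
  intro i hi
  cases i with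
  | zero =>
      exact ⟨by rw [kPlus_zero, kPlus_zero], by rw [kMinus_zero, kMinus_zero]⟩
  | succ j =>
      have hjn : j < matchingTime β α := hi
      have hP := ((K (matchingTime β α) le_rfl).2.2.2 j hjn).1
      have hN := ((K (matchingTime β α) le_rfl).2.2.2 j hjn).2
      constructor
      · rw [kPlus_succ β α' j, hP, ← kPlus_succ β α₁ j]
        exact (hk₁ _ hi).1
      · rw [kMinus_succ β α' j, hN, ← kMinus_succ β α₁ j]
        exact (hk₁ _ hi).2
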